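/- Let p ≥ 2 and let H = K₂ ∨ K̄ₚ be the complete split graph on n = p + 2 vertices obtained by joining every vertex of a complete graph K₂ to every vertex of an edgeless graph on p vertices. Then the two largest signless Laplacian eigenvalues of H are q₁(H) = (n + 2 + √(n² + 4n − 12))/2 and q₂(H) = n − 2, and consequently q₁(H) + q₂(H) > d₁(H) + d₂(H) + 1, where d₁(H) ≥ d₂(H) are the two largest vertex degrees of H. -/

import Mathlib

open Matrix

/-- The signless Laplacian matrix `Q(G) = D + A` of a simple graph, over `ℝ`. -/
def sLapMatrix {m : ℕ} (G : SimpleGraph (Fin m)) [DecidableRel G.Adj] :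
    Matrix (Fin m) (Fin m) ℝ :=
  G.degMatrix ℝ + G.adjMatrix ℝ

/-- `q` lists the eigenvalues of `A` (with multiplicity) in non-increasing order. -/
def IsEigSeq {m : ℕ} (A : Matrix (Fin m) (Fin m) ℝ) (q : Fin m → ℝ) : Prop :=
  Antitone q ∧ ∃ (hA : A.IsHermitian) (σ : Equiv.Perm (Fin m)),
    ∀ i, q i = hA.eigenvalues (σ i)

/-- `d` lists the degrees of `G` (with multiplicity) in non-increasing order. -/
def IsDegSeq {m : ℕ} (G : SimpleGraph (Fin m)) [DecidableRel G.Adj] (d : Fin m → ℕ) : Prop :=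
  Antitone d ∧ ∃ σ : Equiv.Perm (Fin m), ∀ i, d i = G.degree (σ i)

/-- The complete split graph `K₂ ∨ K̄ₚ` on `p + 2` vertices: vertices `0` and `1` form the
complete part and are joined to everything; the remaining `p` vertices are independent. -/
def completeSplit (p : ℕ) : SimpleGraph (Fin (p + 2)) where
  Adj a b := a ≠ b ∧ (a.val ≤ 1 ∨ b.val ≤ 1)
  symm := by constructor; intro a b h; exact ⟨h.1.symm, by tauto⟩
  loopless := by constructor; intro a h; exact h.1 rfl

instance completeSplit.adjDecidable (p : ℕ) : DecidableRel (completeSplit p).Adj := fun a b =>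
  inferInstanceAs (Decidable (a ≠ b ∧ (a.val ≤ 1 ∨ b.val ≤ 1)))

/-!
The two vertex classes `{0, 1}` and `{2, …, p + 1}` form an equitable partition with quotient
matrix `[[p + 2, p], [2, 2]]`; its eigenvalues `(p + 4 ± √(p² + 8p)) / 2` lift to eigenvectors of
`Q` that are constant on the classes. The remaining eigenvectors are `e₀ - e₁` (eigenvalue `p`)
and the vectors `eⱼ - e_{p+1}`, `2 ≤ j ≤ p` (eigenvalue `2`). These `p + 2` eigenvectors are linearly
independent, so they determine the spectrum with multiplicities; listed in non-increasing order
it starts with `(p + 4 + √(p² + 8p)) / 2, p`. The degrees are `p + 1, p + 1, 2, …, 2`, and the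
inequality reduces to `√(p² + 8p) > p + 2`, i.e. `p > 1`.
-/

open Finset Polynomial

theorem eq_of_antitone_of_map_univ_eq {α : Type*} [PartialOrder α] {m : ℕ} {f g : Fin m → α}
    (hf : Antitone f) (hg : Antitone g) (h : univ.val.map f = univ.val.map g) : f = g := by
  rw [Fin.univ_val_map, Fin.univ_val_map, Multiset.coe_eq_coe] at h
  exact List.ofFn_injective (h.eq_of_sortedGE hf.sortedGE_ofFn hg.sortedGE_ofFn)

theorem map_univ_comp_perm {ι α : Type*} [Fintype ι] (f : ι → α) (σ : Equiv.Perm ι) :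
    univ.val.map (f ∘ σ) = univ.val.map f := by
  rw [← Multiset.map_map, Multiset.map_univ_val_equiv]

theorem sum_univ_fin_add_two {M : Type*} [AddCommMonoid M] {p : ℕ} (x : Fin (p + 2) → M) :
    ∑ i, x i = x 0 + x 1 + ∑ k : Fin p, x k.succ.succ := by
  simp [Fin.sum_univ_succ, add_assoc]

theorem Matrix.IsHermitian.map_eigenvalues_eq {n : Type*} [Fintype n] [DecidableEq n]
    {A : Matrix n n ℝ} (hA : A.IsHermitian) {v : n → n → ℝ} {μ : n → ℝ}
    (hv : ∀ i, A *ᵥ v i = μ i • v i) (hli : LinearIndependent ℝ v) :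
    univ.val.map hA.eigenvalues = univ.val.map μ := by
  have hP : IsUnit (of v)ᵀ := (isUnit_transpose _).2 (linearIndependent_rows_iff_isUnit.1 hli)
  have hAP : A * (of v)ᵀ = (of v)ᵀ * diagonal μ := by
    ext i j
    rw [mul_diagonal, mul_comm]
    exact congrFun (hv j) i
  have hchar : A.charpoly = (diagonal μ).charpoly := by
    rw [← charpoly_units_conj hP.unit (diagonal μ), IsUnit.unit_spec, ← hAP, mul_assoc,
      mul_nonsing_inv _ ((isUnit_iff_isUnit_det _).1 hP), mul_one]
  have hroots := hA.roots_charpoly_eq_eigenvalues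
  rw [hchar, charpoly_diagonal,
    roots_prod _ _ (by simp [Finset.prod_ne_zero_iff, X_sub_C_ne_zero])] at hroots
  simpa using hroots.symm

theorem sLapMatrix_mulVec_apply {m : ℕ} (G : SimpleGraph (Fin m)) [DecidableRel G.Adj]
    (x : Fin m → ℝ) (i : Fin m) :
    (sLapMatrix G *ᵥ x) i = G.degree i * x i + ∑ u ∈ G.neighborFinset i, x u := by
  rw [sLapMatrix, add_mulVec, Pi.add_apply, SimpleGraph.degMatrix_mulVec_apply,
    SimpleGraph.adjMatrix_mulVec_apply]

section completeSplit

variable {p : ℕ}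

theorem completeSplit_neighborFinset_of_le_one {i : Fin (p + 2)} (hi : i.val ≤ 1) :
    (completeSplit p).neighborFinset i = univ.erase i := by
  ext j
  rw [SimpleGraph.mem_neighborFinset, mem_erase]
  exact ⟨fun h => ⟨h.1.symm, mem_univ j⟩, fun h => ⟨h.1.symm, Or.inl hi⟩⟩

theorem completeSplit_neighborFinset_of_one_lt {i : Fin (p + 2)} (hi : 1 < i.val) :
    (completeSplit p).neighborFinset i = {0, 1} := by
  ext j
  rw [SimpleGraph.mem_neighborFinset, mem_insert, mem_singleton]
  change i ≠ j ∧ (i.val ≤ 1 ∨ j.val ≤ 1) ↔ _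
  simp only [ne_eq, Fin.ext_iff, Fin.val_zero, Fin.val_one]
  omega

theorem completeSplit_degree (i : Fin (p + 2)) :
    (completeSplit p).degree i = if i.val ≤ 1 then p + 1 else 2 := by
  rw [← SimpleGraph.card_neighborFinset_eq_degree]
  split_ifs with hi
  · simp [completeSplit_neighborFinset_of_le_one hi]
  · simp [completeSplit_neighborFinset_of_one_lt (not_le.1 hi)]

theorem completeSplit_degree_antitone : Antitone fun i => (completeSplit p).degree i := by
  intro i j hij
  simp only [completeSplit_degree]
  split_ifs <;> omega

theorem sLapMatrix_completeSplit_mulVec_apply (x : Fin (p + 2) → ℝ) (i : Fin (p + 2)) :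
    (sLapMatrix (completeSplit p) *ᵥ x) i =
      if i.val ≤ 1 then p * x i + ∑ u, x u else 2 * x i + x 0 + x 1 := by
  rw [sLapMatrix_mulVec_apply, completeSplit_degree]
  split_ifs with hi
  · rw [completeSplit_neighborFinset_of_le_one hi, sum_erase_eq_sub (mem_univ i)]
    push_cast
    ring
  · rw [completeSplit_neighborFinset_of_one_lt (not_le.1 hi), sum_pair (by simp)]
    push_cast
    ring

theorem sLapMatrix_completeSplit_mulVec_single_zero_sub_single_one :
    sLapMatrix (completeSplit p) *ᵥ (Pi.single 0 1 - Pi.single 1 1) =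
      (p : ℝ) • (Pi.single 0 1 - Pi.single 1 1) := by
  ext i
  rw [sLapMatrix_completeSplit_mulVec_apply]
  split_ifs with hi
  · simp [sum_sub_distrib]
  · have hi0 : i ≠ 0 := by rintro rfl; simp at hi
    have hi1 : i ≠ 1 := by rintro rfl; simp at hi
    simp [hi0, hi1]

theorem sLapMatrix_completeSplit_mulVec_single_sub_single {j k : Fin (p + 2)} (hj : 1 < j.val)
    (hk : 1 < k.val) :
    sLapMatrix (completeSplit p) *ᵥ (Pi.single j 1 - Pi.single k 1) =
      (2 : ℝ) • (Pi.single j 1 - Pi.single k 1) := by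
  have h₀₁ (l : Fin (p + 2)) (hl : 1 < l.val) : l ≠ 0 ∧ l ≠ 1 := by
    constructor <;> rintro rfl <;> simp at hl
  ext i
  rw [sLapMatrix_completeSplit_mulVec_apply]
  split_ifs with hi
  · have hij : i ≠ j := by rintro rfl; omega
    have hik : i ≠ k := by rintro rfl; omega
    simp [sum_sub_distrib, hij, hik]
  · simp [Pi.single_apply, (h₀₁ j hj).1, (h₀₁ j hj).2, (h₀₁ k hk).1, (h₀₁ k hk).2]

def blockVec (p : ℕ) (a b : ℝ) : Fin (p + 2) → ℝ := fun i => if i.val ≤ 1 then a else b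

theorem blockVec_dotProduct (a b : ℝ) (x : Fin (p + 2) → ℝ) :
    blockVec p a b ⬝ᵥ x = (a - b) * (x 0 + x 1) + b * ∑ i, x i := by
  have hrest (k : Fin p) : blockVec p a b k.succ.succ = b := if_neg (by simp)
  rw [dotProduct, sum_univ_fin_add_two, sum_univ_fin_add_two x]
  simp only [hrest, ← mul_sum]
  simp only [blockVec, Fin.val_zero, Fin.val_one, zero_le_one, le_refl, if_true]
  ring

theorem sum_blockVec (a b : ℝ) : ∑ i, blockVec p a b i = 2 * a + p * b := by
  rw [← dotProduct_one, blockVec_dotProduct]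
  simp only [Pi.one_apply, sum_const, card_univ, Fintype.card_fin, nsmul_one]
  push_cast
  ring

theorem sLapMatrix_completeSplit_mulVec_blockVec {μ : ℝ} (hμ : μ ^ 2 - (p + 4) * μ + 4 = 0) :
    sLapMatrix (completeSplit p) *ᵥ blockVec p (μ - 2) 2 = μ • blockVec p (μ - 2) 2 := by
  ext i
  rw [sLapMatrix_completeSplit_mulVec_apply, sum_blockVec, Pi.smul_apply, smul_eq_mul]
  by_cases hi : i.val ≤ 1
  · simp only [blockVec, hi, if_true]
    linear_combination -hμ
  · simp only [blockVec, hi, if_false, Fin.val_zero, Fin.val_one, zero_le_one, le_refl, if_true]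
    ring

noncomputable def eigPlus (p : ℕ) : ℝ := (p + 4 + √(p ^ 2 + 8 * p)) / 2

noncomputable def eigMinus (p : ℕ) : ℝ := (p + 4 - √(p ^ 2 + 8 * p)) / 2

theorem eigPlus_sq_sub (p : ℕ) : eigPlus p ^ 2 - (p + 4) * eigPlus p + 4 = 0 := by
  have h := Real.sq_sqrt (by positivity : (0 : ℝ) ≤ p ^ 2 + 8 * p)
  unfold eigPlus
  linear_combination h / 4

theorem eigMinus_sq_sub (p : ℕ) : eigMinus p ^ 2 - (p + 4) * eigMinus p + 4 = 0 := by
  have h := Real.sq_sqrt (by positivity : (0 : ℝ) ≤ p ^ 2 + 8 * p)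
  unfold eigMinus
  linear_combination h / 4

theorem eigMinus_lt_eigPlus (hp : 0 < p) : eigMinus p < eigPlus p := by
  have : 0 < √(p ^ 2 + 8 * p : ℝ) := Real.sqrt_pos.2 (by positivity)
  unfold eigMinus eigPlus
  linarith

theorem eigMinus_lt_two (hp : 0 < p) : eigMinus p < 2 := by
  have hp' : (0 : ℝ) < p := by exact_mod_cast hp
  have : (p : ℝ) < √(p ^ 2 + 8 * p) := (Real.lt_sqrt hp'.le).2 (by nlinarith)
  unfold eigMinus
  linarith

theorem add_three_lt_eigPlus (hp : 1 < p) : p + 3 < eigPlus p := by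
  have hp' : (1 : ℝ) < p := by exact_mod_cast hp
  have : (p : ℝ) + 2 < √(p ^ 2 + 8 * p) := (Real.lt_sqrt (by positivity)).2 (by nlinarith)
  unfold eigPlus
  linarith

noncomputable def completeSplitSpectrum (p : ℕ) (i : Fin (p + 2)) : ℝ :=
  if i.val = 0 then eigPlus p else if i.val = 1 then p else if i.val = p + 1 then eigMinus p else 2

theorem completeSplitSpectrum_antitone (hp : 2 ≤ p) : Antitone (completeSplitSpectrum p) := by
  have h₁ := add_three_lt_eigPlus (p := p) (by omega)
  have h₂ := eigMinus_lt_two (p := p) (by omega)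
  have hp' : (2 : ℝ) ≤ p := by exact_mod_cast hp
  intro i j hij
  rw [Fin.le_def] at hij
  unfold completeSplitSpectrum
  split_ifs <;> first | omega | linarith

noncomputable def completeSplitEigenvector (p : ℕ) (j : Fin (p + 2)) : Fin (p + 2) → ℝ :=
  if j.val = 0 then blockVec p (eigPlus p - 2) 2
  else if j.val = 1 then Pi.single 0 1 - Pi.single 1 1
  else if j.val = p + 1 then blockVec p (eigMinus p - 2) 2
  else Pi.single j 1 - Pi.single (Fin.last (p + 1)) 1

theorem sLapMatrix_completeSplit_mulVec_eigenvector (j : Fin (p + 2)) :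
    sLapMatrix (completeSplit p) *ᵥ completeSplitEigenvector p j =
      completeSplitSpectrum p j • completeSplitEigenvector p j := by
  unfold completeSplitEigenvector completeSplitSpectrum
  split_ifs with h0 h1 hl
  · exact sLapMatrix_completeSplit_mulVec_blockVec (eigPlus_sq_sub p)
  · exact sLapMatrix_completeSplit_mulVec_single_zero_sub_single_one
  · exact sLapMatrix_completeSplit_mulVec_blockVec (eigMinus_sq_sub p)
  · exact sLapMatrix_completeSplit_mulVec_single_sub_single (by omega)
      (by simp only [Fin.val_last]; omega)

theorem linearIndependent_completeSplitEigenvector (hp : 0 < p) :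
    LinearIndependent ℝ (completeSplitEigenvector p) := by
  change LinearIndependent ℝ (of (completeSplitEigenvector p)).row
  rw [linearIndependent_rows_iff_isUnit, ← mulVec_injective_iff_isUnit, ← coe_mulVecLin,
    injective_iff_map_eq_zero]
  intro x hx
  have hdot (j : Fin (p + 2)) : completeSplitEigenvector p j ⬝ᵥ x = 0 := congrFun hx j
  have h01 : x 0 = x 1 := by
    simpa [completeSplitEigenvector, sub_eq_zero] using hdot 1
  have hrest (k : Fin p) : x k.succ.succ = x (Fin.last (p + 1)) := by
    by_cases hk : k.val + 1 = p
    · congr 1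
      ext
      simpa using hk
    · simpa [completeSplitEigenvector, hk, sub_eq_zero] using hdot k.succ.succ
  have hsum : ∑ i, x i = 2 * x 0 + p * x (Fin.last (p + 1)) := by
    rw [sum_univ_fin_add_two, ← h01, sum_congr rfl fun k _ => hrest k, sum_const, card_univ,
      Fintype.card_fin, nsmul_eq_mul]
    ring
  have hplus : (eigPlus p - 2 - 2) * (x 0 + x 1) + 2 * ∑ i, x i = 0 := by
    simpa [completeSplitEigenvector, blockVec_dotProduct] using hdot 0
  have hminus : (eigMinus p - 2 - 2) * (x 0 + x 1) + 2 * ∑ i, x i = 0 := by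
    simpa [completeSplitEigenvector, blockVec_dotProduct, hp.ne'] using hdot (Fin.last (p + 1))
  have hx0 : x 0 = 0 := by
    have hdiff : (eigPlus p - eigMinus p) * (x 0 + x 1) = 0 := by linarith
    have := (mul_eq_zero.1 hdiff).resolve_left (sub_pos.2 (eigMinus_lt_eigPlus hp)).ne'
    linarith
  have hlast : x (Fin.last (p + 1)) = 0 := by
    rw [hsum, ← h01, hx0] at hplus
    have hpt : (p : ℝ) * x (Fin.last (p + 1)) = 0 := by linarith
    exact (mul_eq_zero.1 hpt).resolve_left (by exact_mod_cast hp.ne')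
  funext i
  refine Fin.cases hx0 (Fin.cases ?_ fun k => ?_) i
  · simpa [← h01]
  · simpa [hrest] using hlast

end completeSplit

theorem completeSplit_eigs_and_sum_gt {p : ℕ} (hp : 2 ≤ p)
    (q : Fin (p + 2) → ℝ) (hq : IsEigSeq (sLapMatrix (completeSplit p)) q)
    (d : Fin (p + 2) → ℕ) (hd : IsDegSeq (completeSplit p) d) :
    q ⟨0, by omega⟩ =
      ((p + 2 : ℝ) + 2 + Real.sqrt ((p + 2 : ℝ) ^ 2 + 4 * (p + 2 : ℝ) - 12)) / 2 ∧
    q ⟨1, by omega⟩ = (p + 2 : ℝ) - 2 ∧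
    q ⟨0, by omega⟩ + q ⟨1, by omega⟩ >
      (d ⟨0, by omega⟩ : ℝ) + (d ⟨1, by omega⟩ : ℝ) + 1 := by
  obtain ⟨hq_anti, hA, σ, hqσ⟩ := hq
  obtain ⟨hd_anti, τ, hdτ⟩ := hd
  have hq_spec : q = completeSplitSpectrum p := by
    refine eq_of_antitone_of_map_univ_eq hq_anti (completeSplitSpectrum_antitone hp) ?_
    rw [show q = hA.eigenvalues ∘ σ from funext hqσ, map_univ_comp_perm,
      hA.map_eigenvalues_eq sLapMatrix_completeSplit_mulVec_eigenvector
        (linearIndependent_completeSplitEigenvector (by omega))]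
  have hd_deg : d = fun i => (completeSplit p).degree i := by
    refine eq_of_antitone_of_map_univ_eq hd_anti completeSplit_degree_antitone ?_
    rw [show d = (fun i => (completeSplit p).degree i) ∘ τ from funext hdτ, map_univ_comp_perm]
  subst hq_spec hd_deg
  have hq₀ : completeSplitSpectrum p ⟨0, by omega⟩ = eigPlus p := if_pos rfl
  have hq₁ : completeSplitSpectrum p ⟨1, by omega⟩ = p := by simp [completeSplitSpectrum]
  have hd₀ : (completeSplit p).degree ⟨0, by omega⟩ = p + 1 :=
    (completeSplit_degree _).trans (if_pos zero_le_one)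
  have hd₁ : (completeSplit p).degree ⟨1, by omega⟩ = p + 1 :=
    (completeSplit_degree _).trans (if_pos le_rfl)
  refine ⟨?_, ?_, ?_⟩
  · rw [hq₀, eigPlus]
    ring_nf
  · rw [hq₁]
    ring
  · simp only [hq₀, hq₁, hd₀, hd₁]
    push_cast
    linarith [add_three_lt_eigPlus (p := p) (by omega)]
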